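/- Any minimizer B̂ of B ↦ ‖Y − XB‖_nuclear/√n + λ₀‖B‖₁ with Σ̂ := (Y − XB̂)ᵀ(Y − XB̂)/n nonsingular satisfies the KKT conditions: Xᵀ(Y − XB̂)Σ̂^{-1/2}/n = λ₀ Ẑ, where Ẑ is a p×q matrix with all entries of absolute value at most 1 and Ẑ_{k,j} = sign(B̂_{k,j}) whenever B̂_{k,j} ≠ 0. -/

import Mathlib

open Matrix BigOperators

section
open scoped ComplexOrder

/-- The square root of a positive semidefinite matrix, as `Matrix.PosSemidef.sqrt` was defined
in Mathlib (Dec 2024); it has since been removed from Mathlib. -/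
noncomputable def Matrix.PosSemidef.sqrt {n : Type*} [Fintype n] [DecidableEq n] {𝕜 : Type*}
    [RCLike 𝕜] {A : Matrix n n 𝕜} (hA : A.PosSemidef) : Matrix n n 𝕜 :=
  hA.1.eigenvectorUnitary.1 * diagonal ((↑) ∘ (√·) ∘ hA.1.eigenvalues) *
    (star hA.1.eigenvectorUnitary : Matrix n n 𝕜)

end

/-- Nuclear norm `‖A‖_nuclear = trace((AᴴA)^{1/2})` of a real matrix. -/
noncomputable def nuclearNorm {n q : ℕ} (A : Matrix (Fin n) (Fin q) ℝ) : ℝ :=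
  (Matrix.posSemidef_conjTranspose_mul_self A).sqrt.trace

/-!
For positive definite `S` and `R = (AᵀA)^{1/2}`, expanding `tr((R - S) S⁻¹ (R - S)) ≥ 0` gives
`2‖A‖_nuclear ≤ tr(S⁻¹AᵀA) + tr S`, with equality when `S² = AᵀA`. With `S = √n Σ̂^{1/2}` this
majorizes the nuclear-norm term of the objective by a quadratic function of `B` that touches it at
`B̂`. Moving the single entry `B̂_{kj}` by `t` therefore gives
`t G_{kj} ≤ d t² + λ₀ (|B̂_{kj} + t| - |B̂_{kj}|)` for all `t`, where
`G = Xᵀ(Y - XB̂)Σ̂^{-1/2}/n`. Letting `t → 0±` yields `|G_{kj}| ≤ λ₀`; when `B̂_{kj} ≠ 0` both sides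
are differentiable at `t = 0`, where they touch, so `G_{kj} = λ₀ sign B̂_{kj}`. Take `Ẑ = G/λ₀`.
-/

open Filter Topology

namespace Matrix

section
open scoped MatrixOrder ComplexOrder

variable {ι 𝕜 : Type*} [Fintype ι] [DecidableEq ι] [RCLike 𝕜] {A : Matrix ι ι 𝕜}

lemma PosSemidef.sqrt_eq_cfcSqrt (hA : A.PosSemidef) : hA.sqrt = CFC.sqrt A := by
  rw [CFC.sqrt_eq_cfc, cfc_nnreal_eq_real _ A, hA.1.cfc_eq, IsHermitian.cfc,
    Unitary.conjStarAlgAut_apply, PosSemidef.sqrt]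
  congr
  funext x
  simp only [Real.coe_sqrt, Real.coe_toNNReal']
  rcases le_total 0 x with h | h
  · rw [max_eq_left h]
  · rw [max_eq_right h, Real.sqrt_zero, Real.sqrt_eq_zero_of_nonpos h]

lemma PosSemidef.posSemidef_sqrt (hA : A.PosSemidef) : hA.sqrt.PosSemidef := by
  rw [hA.sqrt_eq_cfcSqrt]
  exact (CFC.sqrt_nonneg A).posSemidef

lemma PosSemidef.sqrt_mul_self (hA : A.PosSemidef) : hA.sqrt * hA.sqrt = A := by
  rw [hA.sqrt_eq_cfcSqrt]
  exact CFC.sqrt_mul_sqrt_self A hA.nonneg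

lemma PosSemidef.sqrt_eq_of_mul_self_eq {B : Matrix ι ι 𝕜} (hA : A.PosSemidef)
    (hB : B.PosSemidef) (h : B * B = A) : hA.sqrt = B := by
  rw [hA.sqrt_eq_cfcSqrt]
  exact CFC.sqrt_unique h hB.nonneg

lemma PosDef.posDef_sqrt (hA : A.PosDef) : hA.posSemidef.sqrt.PosDef := by
  rw [hA.posSemidef.sqrt_eq_cfcSqrt]
  exact hA.isStrictlyPositive.sqrt.posDef

end

variable {m ι R : Type*} [Fintype m] [Fintype ι]

lemma PosSemidef.two_mul_trace_sqrt_le [DecidableEq ι] {T S : Matrix ι ι ℝ} (hT : T.PosSemidef)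
    (hS : S.PosDef) :
    2 * hT.sqrt.trace ≤ (S⁻¹ * T).trace + S.trace := by
  set R := hT.sqrt
  have hRR : R * R = T := hT.sqrt_mul_self
  have hRt : Rᴴ = R := hT.posSemidef_sqrt.isHermitian
  have hSt : Sᴴ = S := hS.isHermitian
  have hSu : IsUnit S.det := hS.isUnit.map detMonoidHom
  have hsq := (hS.inv.posSemidef.conjTranspose_mul_mul_same (R - S)).trace_nonneg
  have hexpand : (R - S)ᴴ * S⁻¹ * (R - S) = R * (S⁻¹ * R) - R - R + S := by
    rw [conjTranspose_sub, hRt, hSt]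
    simp only [sub_mul, mul_sub, Matrix.mul_assoc, nonsing_inv_mul _ hSu,
      mul_nonsing_inv_cancel_left _ _ hSu, mul_one]
    abel
  have hcycle : (R * (S⁻¹ * R)).trace = (S⁻¹ * T).trace := by
    rw [trace_mul_comm, Matrix.mul_assoc, hRR]
  rw [hexpand, trace_add, trace_sub, trace_sub, hcycle] at hsq
  linarith

lemma trace_mul_transpose_mul_sub_smul [CommRing R] {Q : Matrix ι ι R} (hQ : Q.IsSymm)
    (M A : Matrix m ι R) (t : R) :
    (Q * ((M - t • A)ᵀ * (M - t • A))).trace =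
      (Q * (Mᵀ * M)).trace - 2 * t * (Q * (Mᵀ * A)).trace + t ^ 2 * (Q * (Aᵀ * A)).trace := by
  have hcross : (Q * (Aᵀ * M)).trace = (Q * (Mᵀ * A)).trace := by
    rw [← trace_transpose, transpose_mul, transpose_mul, transpose_transpose, hQ.eq,
      trace_mul_comm]
  simp only [transpose_sub, transpose_smul, Matrix.sub_mul, Matrix.mul_sub, Matrix.smul_mul,
    Matrix.mul_smul, trace_sub, trace_smul, smul_eq_mul, hcross]
  ring

lemma trace_mul_transpose_mul_mul_single {k : Type*} [Fintype k] [DecidableEq k] [DecidableEq ι]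
    [CommRing R] (Q : Matrix ι ι R) (M : Matrix m ι R) (X : Matrix m k R) (a : k) (b : ι) :
    (Q * (Mᵀ * (X * single a b (1 : R)))).trace = (Xᵀ * M * Qᵀ) a b := by
  rw [← Matrix.mul_assoc, ← Matrix.mul_assoc, trace_mul_single, MulOpposite.op_one, one_smul,
    ← transpose_apply (Q * Mᵀ * X), transpose_mul, transpose_mul, transpose_transpose,
    Matrix.mul_assoc]

lemma sum_abs_add_smul_single {k : Type*} [Fintype k] [DecidableEq k] [DecidableEq ι]
    (B : Matrix k ι ℝ) (a : k) (b : ι) (t : ℝ) :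
    ∑ a', ∑ b', |(B + t • single a b (1 : ℝ)) a' b'| =
      ∑ a', ∑ b', |B a' b'| + (|B a b + t| - |B a b|) := by
  have hentry (a' : k) (b' : ι) : |(B + t • single a b (1 : ℝ)) a' b'| =
      |B a' b'| + if a = a' ∧ b = b' then |B a b + t| - |B a b| else 0 := by
    by_cases h : a = a' ∧ b = b'
    · obtain ⟨rfl, rfl⟩ := h
      simp
    · simp [h]
  simp only [hentry, Finset.sum_add_distrib]
  simp [ite_and]

end Matrix

lemma two_mul_nuclearNorm_le {n q : ℕ} {S : Matrix (Fin q) (Fin q) ℝ} (hS : S.PosDef)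
    (R : Matrix (Fin n) (Fin q) ℝ) :
    2 * nuclearNorm R ≤ (S⁻¹ * (Rᵀ * R)).trace + S.trace :=
  (posSemidef_conjTranspose_mul_self R).two_mul_trace_sqrt_le hS

lemma nuclearNorm_eq_trace_of_mul_self_eq {n q : ℕ} {R : Matrix (Fin n) (Fin q) ℝ}
    {S : Matrix (Fin q) (Fin q) ℝ} (hS : S.PosSemidef) (h : S * S = Rᵀ * R) :
    nuclearNorm R = S.trace := by
  rw [nuclearNorm, PosSemidef.sqrt_eq_of_mul_self_eq _ hS
    (by rwa [conjTranspose_eq_transpose_of_trivial])]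

lemma nuclearNorm_sub_smul_le {n q : ℕ} {M : Matrix (Fin n) (Fin q) ℝ}
    {S : Matrix (Fin q) (Fin q) ℝ} (hS : S.PosDef) (hSS : S * S = Mᵀ * M)
    (A : Matrix (Fin n) (Fin q) ℝ) (t : ℝ) :
    nuclearNorm (M - t • A) ≤
      nuclearNorm M - t * (S⁻¹ * (Mᵀ * A)).trace + t ^ 2 / 2 * (S⁻¹ * (Aᵀ * A)).trace := by
  have hquad := two_mul_nuclearNorm_le hS (M - t • A)
  rw [trace_mul_transpose_mul_sub_smul (isHermitian_iff_isSymm.1 hS.inv.isHermitian), ← hSS,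
    ← Matrix.mul_assoc, nonsing_inv_mul _ (hS.isUnit.map detMonoidHom), Matrix.one_mul] at hquad
  linarith [nuclearNorm_eq_trace_of_mul_self_eq hS.posSemidef hSS]

lemma exists_forall_mul_le_of_minimizer {n p q : ℕ} {X : Matrix (Fin n) (Fin p) ℝ}
    {Y : Matrix (Fin n) (Fin q) ℝ} {Bhat : Matrix (Fin p) (Fin q) ℝ}
    {S : Matrix (Fin q) (Fin q) ℝ} {c l : ℝ} (hc : 0 < c) (hS : S.PosDef)
    (hSS : S * S = (Y - X * Bhat)ᵀ * (Y - X * Bhat))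
    (hmin : ∀ B : Matrix (Fin p) (Fin q) ℝ,
      nuclearNorm (Y - X * Bhat) / c + l * ∑ k, ∑ j, |Bhat k j| ≤
      nuclearNorm (Y - X * B) / c + l * ∑ k, ∑ j, |B k j|) (k : Fin p) (j : Fin q) :
    ∃ d, ∀ t, t * ((Xᵀ * (Y - X * Bhat) * S⁻¹) k j / c) ≤
      d * t ^ 2 + l * (|Bhat k j + t| - |Bhat k j|) := by
  set A := X * single k j (1 : ℝ)
  set Γ := (Xᵀ * (Y - X * Bhat) * S⁻¹) k j
  set T := (S⁻¹ * (Aᵀ * A)).trace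
  refine ⟨T / (2 * c), fun t => ?_⟩
  have hperturb : Y - X * (Bhat + t • single k j 1) = (Y - X * Bhat) - t • A := by
    rw [Matrix.mul_add, Matrix.mul_smul, sub_add_eq_sub_sub]
  have hmajor := nuclearNorm_sub_smul_le hS hSS A t
  rw [trace_mul_transpose_mul_mul_single, (isHermitian_iff_isSymm.1 hS.inv.isHermitian).eq]
    at hmajor
  have hopt := hmin (Bhat + t • single k j 1)
  rw [hperturb, sum_abs_add_smul_single] at hopt
  have hscaled := div_le_div_of_nonneg_right hmajor hc.le
  have hsplit : (nuclearNorm (Y - X * Bhat) - t * Γ + t ^ 2 / 2 * T) / c =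
      nuclearNorm (Y - X * Bhat) / c - t * (Γ / c) + T / (2 * c) * t ^ 2 := by
    ring
  linarith

lemma le_of_forall_pos_le_add_mul {a c d : ℝ} (h : ∀ t > 0, a ≤ c + d * t) : a ≤ c := by
  have hlim : Tendsto (fun t => c + d * t) (𝓝[>] 0) (𝓝 c) :=
    ((Continuous.tendsto' (by fun_prop) 0 c (by simp)).mono_left nhdsWithin_le_nhds)
  exact ge_of_tendsto hlim (eventually_nhdsWithin_of_forall h)

lemma abs_le_of_forall_mul_le {g d l b : ℝ} (hl : 0 ≤ l)
    (h : ∀ t, t * g ≤ d * t ^ 2 + l * (|b + t| - |b|)) : |g| ≤ l := by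
  have hΔ (t : ℝ) : l * (|b + t| - |b|) ≤ l * |t| :=
    mul_le_mul_of_nonneg_left (by linarith [abs_add_le b t]) hl
  refine abs_le.2 ⟨?_, ?_⟩
  · refine neg_le.1 (le_of_forall_pos_le_add_mul (d := d) fun u hu => ?_)
    have hu' := hΔ (-u)
    rw [abs_neg, abs_of_pos hu] at hu'
    nlinarith [h (-u)]
  · refine le_of_forall_pos_le_add_mul (d := d) fun t ht => ?_
    have ht' := hΔ t
    rw [abs_of_pos ht] at ht'
    nlinarith [h t]

lemma Real.hasDerivAt_abs_const_add {b : ℝ} (hb : b ≠ 0) :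
    HasDerivAt (fun t => |b + t|) (Real.sign b) 0 := by
  have := HasDerivAt.comp_const_add b 0 (by rw [add_zero]; exact hasDerivAt_abs hb)
  rcases hb.lt_or_gt with hb | hb
  · simpa [Real.sign_of_neg hb, hb] using this
  · simpa [Real.sign_of_pos hb, hb] using this

lemma eq_mul_sign_of_forall_mul_le {g d l b : ℝ} (hb : b ≠ 0)
    (h : ∀ t, t * g ≤ d * t ^ 2 + l * (|b + t| - |b|)) : g = l * Real.sign b := by
  have hmax : IsLocalMax (fun t => t * g - d * t ^ 2 - l * |b + t|) 0 :=
    Eventually.of_forall fun t => by norm_num; linarith [h t]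
  have hderiv : HasDerivAt (fun t => t * g - d * t ^ 2 - l * |b + t|)
      (1 * g - d * (2 * 0 ^ (2 - 1)) - l * Real.sign b) 0 :=
    (((hasDerivAt_id' 0).mul_const g).sub ((hasDerivAt_pow 2 0).const_mul d)).sub
      ((Real.hasDerivAt_abs_const_add hb).const_mul l)
  have hzero := hmax.hasDerivAt_eq_zero hderiv
  norm_num at hzero
  linarith

/-- KKT conditions for the multivariate square-root Lasso: any minimizer `B̂` of
`B ↦ ‖Y − XB‖_nuclear/√n + λ₀‖B‖₁` with `Σ̂ := (Y−XB̂)ᵀ(Y−XB̂)/n` nonsingular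
(positive definite) satisfies `Xᵀ(Y−XB̂)Σ̂^{-1/2}/n = λ₀Ẑ` with `‖Ẑ‖_∞ ≤ 1` and
`Ẑ_{k,j} = sign(B̂_{k,j})` whenever `B̂_{k,j} ≠ 0`. -/
theorem stmt_2 {n p q : ℕ} (X : Matrix (Fin n) (Fin p) ℝ)
    (Y : Matrix (Fin n) (Fin q) ℝ) (lam0 : ℝ) (hlam0 : 0 < lam0)
    (Bhat : Matrix (Fin p) (Fin q) ℝ)
    (hmin : ∀ B : Matrix (Fin p) (Fin q) ℝ,
      nuclearNorm (Y - X * Bhat) / Real.sqrt n + lam0 * ∑ k, ∑ j, |Bhat k j| ≤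
      nuclearNorm (Y - X * B) / Real.sqrt n + lam0 * ∑ k, ∑ j, |B k j|)
    (hSighat : ((1 / (n : ℝ)) • ((Y - X * Bhat)ᵀ * (Y - X * Bhat))).PosDef) :
    ∃ Zhat : Matrix (Fin p) (Fin q) ℝ,
      (∀ k j, |Zhat k j| ≤ 1) ∧
      (∀ k j, Bhat k j ≠ 0 → Zhat k j = Real.sign (Bhat k j)) ∧
      (1 / (n : ℝ)) • (Xᵀ * (Y - X * Bhat) * (hSighat.posSemidef.sqrt)⁻¹) =
        lam0 • Zhat := by
  rcases isEmpty_or_nonempty (Fin q) with hq | hq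
  · exact ⟨0, fun _ j => isEmptyElim j, fun _ j => isEmptyElim j, Subsingleton.elim _ _⟩
  set M := Y - X * Bhat
  set P := hSighat.posSemidef.sqrt
  have hn : (n : ℝ) ≠ 0 := by
    intro hn
    have hunit := hSighat.isUnit
    rw [hn, div_zero, zero_smul] at hunit
    exact not_isUnit_zero hunit
  have hsqrtn : 0 < Real.sqrt n := Real.sqrt_pos.2 (n.cast_nonneg.lt_of_ne' hn)
  set S := Real.sqrt n • P
  have hS : S.PosDef := hSighat.posDef_sqrt.smul hsqrtn
  have hSS : S * S = Mᵀ * M := by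
    rw [smul_mul_smul_comm, hSighat.posSemidef.sqrt_mul_self, smul_smul,
      Real.mul_self_sqrt n.cast_nonneg, mul_one_div_cancel hn, one_smul]
  set G := (1 / (n : ℝ)) • (Xᵀ * M * P⁻¹)
  have hSinv : S⁻¹ = (Real.sqrt n)⁻¹ • P⁻¹ :=
    inv_eq_right_inv (by rw [smul_mul_smul_comm, mul_inv_cancel₀ hsqrtn.ne', one_smul,
      mul_nonsing_inv _ (hSighat.posDef_sqrt.isUnit.map detMonoidHom)])
  have hG (k j) : G k j = (Xᵀ * M * S⁻¹) k j / Real.sqrt n := by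
    simp only [G, hSinv, Matrix.mul_smul, Matrix.smul_apply, smul_eq_mul]
    field_simp
    rw [Real.sq_sqrt n.cast_nonneg, mul_comm]
  have hfirst (k j) : ∃ d, ∀ t, t * G k j ≤ d * t ^ 2 + lam0 * (|Bhat k j + t| - |Bhat k j|) :=
    hG k j ▸ exists_forall_mul_le_of_minimizer hsqrtn hS hSS hmin k j
  refine ⟨lam0⁻¹ • G, fun k j => ?_, fun k j hb => ?_, (smul_inv_smul₀ hlam0.ne' G).symm⟩
  · obtain ⟨d, hd⟩ := hfirst k j
    rw [Matrix.smul_apply, smul_eq_mul, abs_mul, abs_inv, abs_of_pos hlam0,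
      inv_mul_le_iff₀ hlam0, mul_one]
    exact abs_le_of_forall_mul_le hlam0.le hd
  · obtain ⟨d, hd⟩ := hfirst k j
    rw [Matrix.smul_apply, smul_eq_mul, eq_mul_sign_of_forall_mul_le hb hd,
      inv_mul_cancel_left₀ hlam0.ne']
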